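/- arXiv:1508.01436 — 4 statements merged into one kernel-verified Lean document; each statement's English description precedes it below -/
import Mathlib

section
/- Let (Ω, μ) be a finite measure space, ν ∈ ℝ, ε > 0 and c₊, c₋ ∈ ℝ, and let f: ℝ → ℝ be a Lipschitz function satisfying f(x) ≥ (ν + ε)x − c₊ and f(x) ≥ (ν − ε)x − c₋ for all x ∈ ℝ. Let ψ ∈ L²(Ω) satisfy ψ ≥ 0 almost everywhere and ∫_Ω ψ² dμ = 1, and let w: ℝ → L²(Ω) be any family of functions with ∫_Ω w(t) ψ dμ = 0 for every t ∈ ℝ. Then the height function h(t) = ν t − ∫_Ω f(w(t) + t ψ) ψ dμ tends to −∞ as |t| → ∞ (i.e. h(t) → −∞ both as t → +∞ and as t → −∞). -/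
/-!
Test the lower bounds `f x ≥ (ν ± ε) x - c±` against the nonnegative weight `ψ` at the point
`w t + t ψ`. Since `w t ⟂ ψ` and `‖ψ‖₂ = 1`, the line integrates to `(ν ± ε) t - c± ∫ ψ`, so the
height is at most `∓ ε t + c± ∫ ψ`, which tends to `-∞` as `t → ±∞`.
-/

open Filter MeasureTheory

theorem LipschitzWith.comp_memLp_of_isFiniteMeasure {Ω E F : Type*} [MeasurableSpace Ω]
    {μ : Measure Ω} [IsFiniteMeasure μ] [NormedAddCommGroup E] [NormedAddCommGroup F]
    {p : ENNReal} {K : NNReal} {g : E → F} (hg : LipschitzWith K g) {u : Ω → E}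
    (hu : MemLp u p μ) : MemLp (fun x => g (u x)) p μ := by
  have hg' : LipschitzWith K (fun y => g y - g 0) := fun y z => by
    simpa [edist_sub_right] using hg y z
  convert (hg'.comp_memLp (sub_self _) hu).add (memLp_const (g 0)) using 1
  ext x
  simp

namespace MeasureTheory

variable {Ω : Type*} [MeasurableSpace Ω] {μ : Measure Ω}

theorem integral_comp_mul_ge_of_affine_le [IsFiniteMeasure μ] {g : ℝ → ℝ} {a c : ℝ}
    (hg : ∀ y, a * y - c ≤ g y) {v ψ : Ω → ℝ} (hv : MemLp v 2 μ)
    (hgv : MemLp (fun x => g (v x)) 2 μ) (hψ : MemLp ψ 2 μ) (hψ0 : 0 ≤ᵐ[μ] ψ) :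
    a * ∫ x, v x * ψ x ∂μ - c * ∫ x, ψ x ∂μ ≤ ∫ x, g (v x) * ψ x ∂μ := by
  have hvψ : Integrable (fun x => v x * ψ x) μ := hv.integrable_mul hψ
  have hψ_int : Integrable ψ μ := hψ.integrable (by norm_num)
  calc a * ∫ x, v x * ψ x ∂μ - c * ∫ x, ψ x ∂μ
      = ∫ x, (a * v x - c) * ψ x ∂μ := by
        rw [← integral_const_mul, ← integral_const_mul, ← integral_sub (hvψ.const_mul a)
          (hψ_int.const_mul c)]
        exact integral_congr_ae (Eventually.of_forall fun x => by ring)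
    _ ≤ ∫ x, g (v x) * ψ x ∂μ := by
        refine integral_mono_ae (((hv.const_mul a).sub (memLp_const c)).integrable_mul hψ)
          (hgv.integrable_mul hψ) ?_
        filter_upwards [hψ0] with x hx
        exact mul_le_mul_of_nonneg_right (hg _) hx

theorem integral_add_mul_mul_eq_of_orthogonal {u ψ : Ω → ℝ} (hu : MemLp u 2 μ)
    (hψ : MemLp ψ 2 μ) (hψ1 : ∫ x, ψ x ^ 2 ∂μ = 1) (horth : ∫ x, u x * ψ x ∂μ = 0) (t : ℝ) :
    ∫ x, (u x + t * ψ x) * ψ x ∂μ = t := by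
  have hψψ : Integrable (fun x => t * (ψ x * ψ x)) μ := (hψ.integrable_mul hψ).const_mul t
  calc ∫ x, (u x + t * ψ x) * ψ x ∂μ
      = ∫ x, u x * ψ x + t * (ψ x * ψ x) ∂μ :=
        integral_congr_ae (Eventually.of_forall fun x => by ring)
    _ = t := by
        rw [integral_add (f := fun x => u x * ψ x) (hu.integrable_mul hψ) hψψ,
          integral_const_mul, horth]
        simpa [sq] using congrArg (t * ·) hψ1

end MeasureTheory

/-- Along each fiber, the height function `h(t) = νt - ∫ f(w(t) + tψ) ψ` tends to `-∞`
as `t → ±∞`, provided `f` is bounded below by the two lines `(ν+ε)x - c₊` and `(ν-ε)x - c₋`. -/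
theorem stmt1 {Ω : Type*} [MeasurableSpace Ω] (μ : Measure Ω) [IsFiniteMeasure μ]
    (ν ε : ℝ) (hε : 0 < ε) (cp cm : ℝ) (f : ℝ → ℝ) (K : NNReal)
    (hf : LipschitzWith K f)
    (hfp : ∀ x, (ν + ε) * x - cp ≤ f x)
    (hfm : ∀ x, (ν - ε) * x - cm ≤ f x)
    (ψ : Ω → ℝ) (hψ : MemLp ψ 2 μ) (hψ0 : 0 ≤ᵐ[μ] ψ)
    (hψ1 : ∫ x, ψ x ^ 2 ∂μ = 1)
    (w : ℝ → Ω → ℝ) (hw : ∀ t, MemLp (w t) 2 μ)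
    (hworth : ∀ t, ∫ x, w t x * ψ x ∂μ = 0) :
    Tendsto (fun t => ν * t - ∫ x, f (w t x + t * ψ x) * ψ x ∂μ) atTop atBot ∧
    Tendsto (fun t => ν * t - ∫ x, f (w t x + t * ψ x) * ψ x ∂μ) atBot atBot := by
  have height_le : ∀ a c, (∀ y, a * y - c ≤ f y) → ∀ t,
      ν * t - ∫ x, f (w t x + t * ψ x) * ψ x ∂μ ≤ (ν - a) * t + c * ∫ x, ψ x ∂μ := by
    intro a c hfac t
    have hv : MemLp (fun x => w t x + t * ψ x) 2 μ := (hw t).add (hψ.const_mul t)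
    have hlow := integral_comp_mul_ge_of_affine_le hfac hv
      (hf.comp_memLp_of_isFiniteMeasure hv) hψ hψ0
    rw [integral_add_mul_mul_eq_of_orthogonal (hw t) hψ hψ1 (hworth t)] at hlow
    linarith
  constructor
  · refine tendsto_atBot_mono (height_le _ _ hfp) (tendsto_atBot_add_const_right _ _ ?_)
    exact tendsto_id.const_mul_atTop_of_neg (by linarith)
  · refine tendsto_atBot_mono (height_le _ _ hfm) (tendsto_atBot_add_const_right _ _ ?_)
    exact tendsto_id.const_mul_atBot (by linarith)
end

section
/- Let X and Y be real Banach spaces and j: X → Y an injective continuous linear map. Let T₀: X → Y be a continuous linear operator, λ₀ ∈ ℝ, and φ₀ ∈ X a nonzero vector with (T₀ − λ₀ j) φ₀ = 0. Assume that the kernel of T₀ − λ₀ j is the one-dimensional span of φ₀, that the range of T₀ − λ₀ j is closed, and that Y is the direct sum of this range and the one-dimensional span of j(φ₀) (in particular j(φ₀) does not lie in the range). Let ℓ: X → ℝ be a continuous linear functional with ℓ(φ₀) = 1. Then there exist an open neighborhood U of T₀ in the Banach space B(X, Y) of bounded operators and analytic maps λ: U → ℝ and φ: U → X such that λ(T₀)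 = λ₀, φ(T₀) = φ₀, and for every T ∈ U one has ℓ(φ(T)) = 1 and T(φ(T)) = λ(T) · j(φ(T)); moreover these are unique in the sense that for every T ∈ U there is a neighborhood of (λ₀, φ₀) in ℝ × X in which (λ(T), φ(T)) is the only pair (s, x) satisfying ℓ(x) = 1 and T x = s · j(x). -/
/-!
The normalized eigenpairs `(s, x)` of `T` are the zeros of the analytic map
`G (T, (s, x)) = (ℓ x - 1, T x - s • j x)`. At `(T₀, (λ₀, φ₀))` its derivative in `(s, x)` is the
bordered operator `(σ, v) ↦ (ℓ v, (T₀ - λ₀ j) v - σ • j φ₀)`, which is bijective because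
`ker (T₀ - λ₀ j) = span {φ₀}` with `ℓ φ₀ = 1` and `j φ₀` spans a complement of the range. The
eigenpair is then the implicit function of `G`; it is analytic because the local inverse of the
analytic map `(T, z) ↦ (T, G (T, z))` is analytic.
-/

open Filter Topology Set

theorem bijective_bordered_of_isCompl {K X Y : Type*} [Field K] [AddCommGroup X] [Module K X]
    [AddCommGroup Y] [Module K Y] {A : X →ₗ[K] Y} {ℓ : X →ₗ[K] K} {φ₀ : X} {y₀ : Y}
    (hker : LinearMap.ker A = Submodule.span K {φ₀}) (hℓ : ℓ φ₀ = 1)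
    (hcompl : IsCompl (LinearMap.range A) (Submodule.span K {y₀})) (hy₀ : y₀ ≠ 0) :
    Function.Bijective (fun p : K × X => (ℓ p.2, A p.2 - p.1 • y₀)) := by
  have hAφ₀ : A φ₀ = 0 := by
    rw [← LinearMap.mem_ker, hker]; exact Submodule.mem_span_singleton_self φ₀
  constructor
  · rintro ⟨s, x⟩ ⟨t, x'⟩ h
    obtain ⟨hℓx, hA⟩ := Prod.mk.inj h
    have hdiff : A (x - x') = (s - t) • y₀ := by
      rw [map_sub, sub_smul]; linear_combination (norm := module) hA
    have hzero : A (x - x') = 0 :=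
      Submodule.disjoint_def.mp hcompl.disjoint _ (LinearMap.mem_range_self _ _)
        (hdiff ▸ Submodule.smul_mem _ _ (Submodule.mem_span_singleton_self _))
    have hst : s = t :=
      sub_eq_zero.mp ((smul_eq_zero.mp (hdiff ▸ hzero)).resolve_right hy₀)
    obtain ⟨c, hc⟩ := Submodule.mem_span_singleton.mp (hker ▸ LinearMap.mem_ker.mpr hzero)
    have hc0 : c = 0 := by simpa [hℓ, hℓx] using congrArg ℓ hc
    have hxx' : x = x' := sub_eq_zero.mp (by rw [← hc, hc0, zero_smul])
    rw [hst, hxx']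
  · rintro ⟨a, y⟩
    obtain ⟨r, ⟨x, rfl⟩, m, hm, rfl⟩ :=
      Submodule.mem_sup.mp (hcompl.sup_eq_top ▸ Submodule.mem_top (x := y))
    obtain ⟨c, rfl⟩ := Submodule.mem_span_singleton.mp hm
    refine ⟨(-c, x + (a - ℓ x) • φ₀), ?_⟩
    simp [hℓ, hAφ₀]

section Analytic

variable {𝕜 : Type*} [NontriviallyNormedField 𝕜]

section InverseFunction

variable {E E' : Type*} [NormedAddCommGroup E] [NormedSpace 𝕜 E] [CompleteSpace E]
  [NormedAddCommGroup E'] [NormedSpace 𝕜 E'] [CompleteSpace E']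

theorem AnalyticAt.exists_openPartialHomeomorph_analyticOnNhd_symm {F : E → E'} {a : E}
    {e : E ≃L[𝕜] E'} (hF : AnalyticAt 𝕜 F a) (he : fderiv 𝕜 F a = e) :
    ∃ f : OpenPartialHomeomorph E E', ⇑f = F ∧ a ∈ f.source ∧
      AnalyticOnNhd 𝕜 f.symm f.target := by
  have hstrict : HasStrictFDerivAt F (e : E →L[𝕜] E') a := he ▸ hF.hasStrictFDerivAt
  have hO : IsOpen {p | AnalyticAt 𝕜 F p} := isOpen_analyticAt 𝕜 F
  -- On this set the inverse is analytic at every point, not only at `F a`.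
  have hS : IsOpen ({p | AnalyticAt 𝕜 F p} ∩
      fderiv 𝕜 F ⁻¹' range ((↑) : (E ≃L[𝕜] E') → E →L[𝕜] E')) :=
    ((AnalyticOnNhd.fderiv_of_isOpen (fun _ hp => hp) hO).continuousOn).isOpen_inter_preimage
      hO ContinuousLinearEquiv.isOpen
  refine ⟨(hstrict.toOpenPartialHomeomorph F).restrOpen _ hS, rfl,
    ⟨hstrict.mem_toOpenPartialHomeomorph_source, hF, e, he.symm⟩, fun b hb => ?_⟩
  set f := (hstrict.toOpenPartialHomeomorph F).restrOpen _ hS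
  obtain ⟨-, hFb, i, hi⟩ := f.map_target hb
  exact f.analyticAt_symm hb hFb hi.symm

end InverseFunction

section ImplicitFunction

variable {P Z W : Type*} [NormedAddCommGroup P] [NormedSpace 𝕜 P]
  [NormedAddCommGroup Z] [NormedSpace 𝕜 Z] [NormedAddCommGroup W] [NormedSpace 𝕜 W]

theorem OpenPartialHomeomorph.exists_analyticOnNhd_implicit
    (f : OpenPartialHomeomorph (P × Z) (P × W)) {G : P × Z → W} {p₀ : P} {z₀ : Z}
    (hfG : ⇑f = fun q => (q.1, G q)) (hsrc : (p₀, z₀) ∈ f.source) (hG₀ : G (p₀, z₀) = 0)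
    (hsymm : AnalyticOnNhd 𝕜 f.symm f.target) :
    ∃ (U : Set P) (g : P → Z), IsOpen U ∧ p₀ ∈ U ∧ AnalyticOnNhd 𝕜 g U ∧ g p₀ = z₀ ∧
      (∀ p ∈ U, G (p, g p) = 0) ∧
      (∀ p ∈ U, ∃ V ∈ 𝓝 z₀, g p ∈ V ∧ ∀ z ∈ V, G (p, z) = 0 → z = g p) := by
  have hfst : ∀ q, (f q).1 = q.1 := fun q => by rw [hfG]
  have hf₀ : f (p₀, z₀) = (p₀, 0) := by simp [hfG, hG₀]
  obtain ⟨U₁, V, hU₁, hV, hp₀U₁, hz₀V, hUV⟩ := isOpen_prod_iff.mp f.open_source p₀ z₀ hsrc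
  set g : P → Z := fun p => (f.symm (p, 0)).2
  set U : Set P := (fun p => ((p, 0) : P × W)) ⁻¹' (f '' (U₁ ×ˢ V))
  have hmem : ∀ p ∈ U, (p, g p) ∈ U₁ ×ˢ V ∧ f (p, g p) = (p, 0) ∧
      ((p, 0) : P × W) ∈ f.target := by
    rintro p ⟨q, hq, hfq⟩
    change f q = (p, 0) at hfq
    have hsymm_q : f.symm (p, 0) = q := by rw [← hfq]; exact f.left_inv (hUV hq)
    have hq_eq : (p, g p) = q :=
      Prod.ext (by change p = q.1; rw [← hfst, hfq]) (by simp only [g, hsymm_q])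
    rw [hq_eq, ← hfq]
    exact ⟨hq, rfl, f.map_source (hUV hq)⟩
  refine ⟨U, g, (f.isOpen_image_of_subset_source (hU₁.prod hV) hUV).preimage
      (continuous_id.prodMk continuous_const), ⟨(p₀, z₀), ⟨hp₀U₁, hz₀V⟩, hf₀⟩,
    fun p hp => analyticAt_snd.comp ((hsymm _ (hmem p hp).2.2).comp
      (f := fun p : P => ((p, 0) : P × W)) (analyticAt_id.prod analyticAt_const)),
    by simp only [g, ← hf₀, f.left_inv hsrc],
    fun p hp => by simpa only [hfG] using congrArg Prod.snd (hmem p hp).2.1,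
    fun p hp => ⟨V, hV.mem_nhds hz₀V, (hmem p hp).1.2, fun z hz hGz => ?_⟩⟩
  have hfz : f (p, z) = f (p, g p) := by rw [(hmem p hp).2.1]; simp [hfG, hGz]
  exact congrArg Prod.snd (f.injOn (hUV (mk_mem_prod (hmem p hp).1.1 hz)) (hUV (hmem p hp).1) hfz)

variable [CompleteSpace P] [CompleteSpace Z] [CompleteSpace W]

theorem AnalyticAt.exists_analyticOnNhd_implicit {G : P × Z → W} {p₀ : P} {z₀ : Z}
    (hG : AnalyticAt 𝕜 G (p₀, z₀)) (hG₀ : G (p₀, z₀) = 0)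
    (hbij : Function.Bijective (fderiv 𝕜 (fun z => G (p₀, z)) z₀)) :
    ∃ (U : Set P) (g : P → Z), IsOpen U ∧ p₀ ∈ U ∧ AnalyticOnNhd 𝕜 g U ∧ g p₀ = z₀ ∧
      (∀ p ∈ U, G (p, g p) = 0) ∧
      (∀ p ∈ U, ∃ V ∈ 𝓝 z₀, g p ∈ V ∧ ∀ z ∈ V, G (p, z) = 0 → z = g p) := by
  set G' := fderiv 𝕜 G (p₀, z₀)
  have hpartial : fderiv 𝕜 (fun z => G (p₀, z)) z₀ = G'.comp (ContinuousLinearMap.inr 𝕜 P Z) :=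
    (hG.differentiableAt.hasFDerivAt.comp z₀ (hasFDerivAt_prodMk_right p₀ z₀)).fderiv
  rw [hpartial] at hbij
  -- The derivative of `q ↦ (q.1, G q)` is block triangular with invertible diagonal blocks.
  set e : (P × Z) ≃L[𝕜] (P × W) := (ContinuousLinearEquiv.refl 𝕜 P).skewProd
    (ContinuousLinearEquiv.ofBijective _ (LinearMap.ker_eq_bot.mpr hbij.1)
      (LinearMap.range_eq_top.mpr hbij.2)) (G'.comp (ContinuousLinearMap.inl 𝕜 P Z))
  have he : fderiv 𝕜 (fun q : P × Z => (q.1, G q)) (p₀, z₀) = e := by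
    rw [(hasFDerivAt_fst.prodMk hG.differentiableAt.hasFDerivAt).fderiv]
    ext <;> simp [e, G', Prod.mk_zero_zero]
  obtain ⟨f, hfG, hsrc, hsymm⟩ :=
    (analyticAt_fst.prod hG).exists_openPartialHomeomorph_analyticOnNhd_symm he
  exact f.exists_analyticOnNhd_implicit hfG hsrc hG₀ hsymm

end ImplicitFunction

section EigenEquation

variable {X Y : Type*} [NormedAddCommGroup X] [NormedSpace 𝕜 X]
  [NormedAddCommGroup Y] [NormedSpace 𝕜 Y]

def eigenEquation (j : X →L[𝕜] Y) (ℓ : X →L[𝕜] 𝕜) (q : (X →L[𝕜] Y) × (𝕜 × X)) : 𝕜 × Y :=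
  (ℓ q.2.2 - 1, q.1 q.2.2 - q.2.1 • j q.2.2)

theorem analyticAt_eigenEquation (j : X →L[𝕜] Y) (ℓ : X →L[𝕜] 𝕜) (q) :
    AnalyticAt 𝕜 (eigenEquation j ℓ) q := by
  have h22 : AnalyticAt 𝕜 (fun q : (X →L[𝕜] Y) × (𝕜 × X) => q.2.2) q :=
    analyticAt_snd.comp analyticAt_snd
  have happly : AnalyticAt 𝕜 (fun q : (X →L[𝕜] Y) × (𝕜 × X) => q.1 q.2.2) q :=
    ((ContinuousLinearMap.id 𝕜 (X →L[𝕜] Y)).analyticAt_bilinear (q.1, q.2.2)).comp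
      (f := fun q : (X →L[𝕜] Y) × (𝕜 × X) => (q.1, q.2.2)) (analyticAt_fst.prod h22)
  exact (((ℓ.analyticAt _).fun_comp h22).sub analyticAt_const).prod
    (happly.sub ((analyticAt_fst.comp analyticAt_snd).smul ((j.analyticAt _).fun_comp h22)))

theorem fderiv_eigenEquation_right (j : X →L[𝕜] Y) (ℓ : X →L[𝕜] 𝕜) (T : X →L[𝕜] Y) (s : 𝕜)
    (x : X) :
    ⇑(fderiv 𝕜 (fun z => eigenEquation j ℓ (T, z)) (s, x)) =
      fun p : 𝕜 × X => (ℓ p.2, (T - s • j) p.2 - p.1 • j x) := by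
  have h : HasFDerivAt (fun z : 𝕜 × X => eigenEquation j ℓ (T, z)) _ (s, x) :=
    ((ℓ.hasFDerivAt.comp _ hasFDerivAt_snd).sub_const 1).prodMk
      ((T.hasFDerivAt.comp _ hasFDerivAt_snd).sub
        (hasFDerivAt_fst.smul (j.hasFDerivAt.comp _ hasFDerivAt_snd)))
  ext p <;> simp [h.fderiv, sub_sub]

theorem eigenEquation_eq_zero_iff {j : X →L[𝕜] Y} {ℓ : X →L[𝕜] 𝕜} {T : X →L[𝕜] Y} {s : 𝕜}
    {x : X} :
    eigenEquation j ℓ (T, (s, x)) = 0 ↔ ℓ x = 1 ∧ T x = s • j x := by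
  simp [eigenEquation, sub_eq_zero]

end EigenEquation

end Analytic

theorem stmt2_general {X Y : Type*} [NormedAddCommGroup X] [NormedSpace ℝ X] [CompleteSpace X]
    [NormedAddCommGroup Y] [NormedSpace ℝ Y] [CompleteSpace Y]
    (j : X →L[ℝ] Y) (hj : Function.Injective j)
    (T₀ : X →L[ℝ] Y) (lam₀ : ℝ) (φ₀ : X) (hφ₀ : φ₀ ≠ 0)
    (heig : (T₀ - lam₀ • j) φ₀ = 0)
    (hker : LinearMap.ker ((T₀ - lam₀ • j : X →L[ℝ] Y) : X →ₗ[ℝ] Y) = Submodule.span ℝ {φ₀})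
    (hcompl : IsCompl (LinearMap.range ((T₀ - lam₀ • j : X →L[ℝ] Y) : X →ₗ[ℝ] Y))
      (Submodule.span ℝ {j φ₀}))
    (ℓ : X →L[ℝ] ℝ) (hℓ : ℓ φ₀ = 1) :
    ∃ (U : Set (X →L[ℝ] Y)) (lam : (X →L[ℝ] Y) → ℝ) (φ : (X →L[ℝ] Y) → X),
      IsOpen U ∧ T₀ ∈ U ∧
      AnalyticOnNhd ℝ lam U ∧ AnalyticOnNhd ℝ φ U ∧
      lam T₀ = lam₀ ∧ φ T₀ = φ₀ ∧
      (∀ T ∈ U, ℓ (φ T) = 1 ∧ T (φ T) = lam T • j (φ T)) ∧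
      (∀ T ∈ U, ∃ V ∈ 𝓝 ((lam₀, φ₀) : ℝ × X), (lam T, φ T) ∈ V ∧
        ∀ p ∈ V, ℓ p.2 = 1 → T p.2 = p.1 • j p.2 → p = (lam T, φ T)) := by
  have hjφ₀ : j φ₀ ≠ 0 := fun h => hφ₀ (hj (h.trans (map_zero j).symm))
  have hbij : Function.Bijective (fderiv ℝ (fun z => eigenEquation j ℓ (T₀, z)) (lam₀, φ₀)) := by
    rw [fderiv_eigenEquation_right]
    exact bijective_bordered_of_isCompl hker hℓ hcompl hjφ₀
  have hG₀ : eigenEquation j ℓ (T₀, (lam₀, φ₀)) = 0 :=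
    eigenEquation_eq_zero_iff.mpr ⟨hℓ, by simpa [sub_eq_zero] using heig⟩
  obtain ⟨U, g, hU, hT₀, hg, hg₀, hgG, hguniq⟩ :=
    (analyticAt_eigenEquation j ℓ _).exists_analyticOnNhd_implicit hG₀ hbij
  refine ⟨U, fun T => (g T).1, fun T => (g T).2, hU, hT₀,
    fun T hT => analyticAt_fst.comp (hg T hT), fun T hT => analyticAt_snd.comp (hg T hT),
    congrArg Prod.fst hg₀, congrArg Prod.snd hg₀,
    fun T hT => eigenEquation_eq_zero_iff.mp (hgG T hT), fun T hT => ?_⟩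
  obtain ⟨V, hV, hgV, huniq⟩ := hguniq T hT
  exact ⟨V, hV, hgV, fun p hp h1 h2 => huniq p hp (eigenEquation_eq_zero_iff.mpr ⟨h1, h2⟩)⟩

/-- Analytic perturbation of a simple eigenvalue: if `(T₀ - λ₀ j) φ₀ = 0`, the kernel of
`T₀ - λ₀ j` is the span of `φ₀`, its range is closed, and `Y` is the direct sum of this
range and the span of `j φ₀`, then nearby operators `T` have a unique eigenpair
`(λ(T), φ(T))` normalized by `ℓ(φ(T)) = 1`, depending analytically on `T`. -/
theorem stmt2 {X Y : Type*} [NormedAddCommGroup X] [NormedSpace ℝ X] [CompleteSpace X]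
    [NormedAddCommGroup Y] [NormedSpace ℝ Y] [CompleteSpace Y]
    (j : X →L[ℝ] Y) (hj : Function.Injective j)
    (T₀ : X →L[ℝ] Y) (lam₀ : ℝ) (φ₀ : X) (hφ₀ : φ₀ ≠ 0)
    (heig : (T₀ - lam₀ • j) φ₀ = 0)
    (hker : LinearMap.ker ((T₀ - lam₀ • j : X →L[ℝ] Y) : X →ₗ[ℝ] Y) = Submodule.span ℝ {φ₀})
    (hclosed : IsClosed (LinearMap.range ((T₀ - lam₀ • j : X →L[ℝ] Y) : X →ₗ[ℝ] Y) : Set Y))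
    (hcompl : IsCompl (LinearMap.range ((T₀ - lam₀ • j : X →L[ℝ] Y) : X →ₗ[ℝ] Y))
      (Submodule.span ℝ {j φ₀}))
    (ℓ : X →L[ℝ] ℝ) (hℓ : ℓ φ₀ = 1) :
    ∃ (U : Set (X →L[ℝ] Y)) (lam : (X →L[ℝ] Y) → ℝ) (φ : (X →L[ℝ] Y) → X),
      IsOpen U ∧ T₀ ∈ U ∧
      AnalyticOnNhd ℝ lam U ∧ AnalyticOnNhd ℝ φ U ∧
      lam T₀ = lam₀ ∧ φ T₀ = φ₀ ∧
      (∀ T ∈ U, ℓ (φ T) = 1 ∧ T (φ T) = lam T • j (φ T)) ∧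
      (∀ T ∈ U, ∃ V ∈ 𝓝 ((lam₀, φ₀) : ℝ × X), (lam T, φ T) ∈ V ∧
        ∀ p ∈ V, ℓ p.2 = 1 → T p.2 = p.1 • j p.2 → p = (lam T, φ T)) :=
  stmt2_general j hj T₀ lam₀ φ₀ hφ₀ heig hker hcompl ℓ hℓ
end

section
/- Let g: ℝ → ℝ be differentiable and let A = {x ∈ ℝ : g(x) > 0}. If A is nonempty and g'(x) ≠ 0 for every x ∈ A, then A contains a semi-infinite interval: there exists c ∈ ℝ such that either (c, +∞) ⊆ A or (−∞, c) ⊆ A. -/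
/-!
If `A` contained no ray, there would be points `a < x < b` with `x ∈ A` and `a, b ∉ A`. The maximum
of `g` on `[a, b]` is then positive and attained in the interior, so it is a critical point in `A`.
-/

open Set

theorem exists_isLocalMax_mem_Ioo_of_lt {α β : Type*} [ConditionallyCompleteLinearOrder α]
    [TopologicalSpace α] [OrderTopology α] [LinearOrder β] [TopologicalSpace β]
    [ClosedIciTopology β] {f : α → β} {a b x : α} (hf : ContinuousOn f (Icc a b))
    (hx : x ∈ Icc a b) (ha : f a < f x) (hb : f b < f x) :
    ∃ m ∈ Ioo a b, f x ≤ f m ∧ IsLocalMax f m := by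
  have h_ends : ∀ z ∈ Icc a b \ Ioo a b, f z < f x := by
    rintro z ⟨⟨haz, hzb⟩, hz⟩
    rcases haz.eq_or_lt with rfl | haz
    · exact ha
    · rwa [hzb.eq_or_lt.resolve_right fun hzb => hz ⟨haz, hzb⟩]
  obtain ⟨m, hm, hmax⟩ := isCompact_Icc.exists_isMaxOn_mem_subset hf hx h_ends
  exact ⟨m, hm, hmax hx, hmax.isLocalMax (Icc_mem_nhds hm.1 hm.2)⟩

/-- If `A = {x | g x > 0}` is nonempty and contains no critical point of the
differentiable function `g`, then `A` contains a semi-infinite interval. -/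
theorem stmt5 (g : ℝ → ℝ) (hg : Differentiable ℝ g)
    (hne : {x : ℝ | 0 < g x}.Nonempty)
    (hcrit : ∀ x, 0 < g x → deriv g x ≠ 0) :
    ∃ c : ℝ, Set.Ioi c ⊆ {x : ℝ | 0 < g x} ∨ Set.Iio c ⊆ {x : ℝ | 0 < g x} := by
  obtain ⟨x, hx⟩ := hne
  by_contra! h
  obtain ⟨hright, hleft⟩ := h x
  obtain ⟨b, hxb, hb⟩ := not_subset.1 hright
  obtain ⟨a, hax, ha⟩ := not_subset.1 hleft
  obtain ⟨m, -, hxm, hmax⟩ := exists_isLocalMax_mem_Ioo_of_lt hg.continuous.continuousOn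
    ⟨hax.le, hxb.le⟩ ((not_lt.1 ha).trans_lt hx) ((not_lt.1 hb).trans_lt hx)
  exact hcrit m (hx.trans_le hxm) hmax.deriv_eq_zero
end

section
/- Let g: ℝ → ℝ be twice differentiable and suppose that every zero of g' is not a zero of g'' (every critical point of g is nondegenerate). Let x* ∈ ℝ satisfy g'(x*) = 0 and g''(x*) < 0, and suppose there exists y ∈ ℝ with g(y) > g(x*). Then there exists z ∈ ℝ with g'(z) = 0, g''(z) > 0 and g(z) < g(x*). -/
/-!
Minimise `g` over the segment between `x₀` and `y`. Since `x₀` is a strict local maximum and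
`g y > g x₀`, the minimum value is below `g x₀` and is attained at neither endpoint, hence at an
interior local minimum `z`. There `g' z = 0`, and `g'' z < 0` would make `z` a strict local
maximum, so `g'' z > 0` by nondegeneracy.
-/

open Set Filter Topology

section StrictSecondDerivativeTest

variable {f : ℝ → ℝ} {x₀ : ℝ}

lemma eventually_nhdsLT_lt_of_deriv_pos (hc : Continuous f)
    (hf : ∀ᶠ x in 𝓝[<] x₀, 0 < deriv f x) : ∀ᶠ x in 𝓝[<] x₀, f x < f x₀ := by
  obtain ⟨a, ha, hpos⟩ := (nhdsLT_basis x₀).eventually_iff.mp hf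
  have hmono : StrictMonoOn f (Icc a x₀) :=
    strictMonoOn_of_deriv_pos (convex_Icc a x₀) hc.continuousOn
      fun x hx => hpos (by rwa [interior_Icc] at hx)
  filter_upwards [Ioo_mem_nhdsLT ha] with x hx
  exact hmono (Ioo_subset_Icc_self hx) (right_mem_Icc.mpr ha.le) hx.2

lemma eventually_nhdsGT_lt_of_deriv_neg (hc : Continuous f)
    (hf : ∀ᶠ x in 𝓝[>] x₀, deriv f x < 0) : ∀ᶠ x in 𝓝[>] x₀, f x < f x₀ := by
  obtain ⟨b, hb, hneg⟩ := (nhdsGT_basis x₀).eventually_iff.mp hf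
  have hanti : StrictAntiOn f (Icc x₀ b) :=
    strictAntiOn_of_deriv_neg (convex_Icc x₀ b) hc.continuousOn
      fun x hx => hneg (by rwa [interior_Icc] at hx)
  filter_upwards [Ioo_mem_nhdsGT hb] with x hx
  exact hanti (left_mem_Icc.mpr hb.le) (Ioo_subset_Icc_self hx) hx.1

/-- A strict form of `isLocalMax_of_deriv_deriv_neg`. -/
lemma eventually_nhdsNE_lt_of_deriv_deriv_neg (hc : Continuous f) (hd : deriv f x₀ = 0)
    (hf : deriv (deriv f) x₀ < 0) : ∀ᶠ x in 𝓝[≠] x₀, f x < f x₀ := by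
  have hsign : ∀ᶠ x in 𝓝[≠] x₀, SignType.sign (deriv f x) = SignType.sign (x₀ - x) :=
    (eventually_nhdsWithin_sign_eq_of_deriv_neg hf hd).filter_mono nhdsWithin_le_nhds
  rw [← nhdsLT_sup_nhdsGT, eventually_sup]
  exact ⟨eventually_nhdsLT_lt_of_deriv_pos hc (deriv_pos_left_of_sign_deriv hsign),
    eventually_nhdsGT_lt_of_deriv_neg hc (deriv_neg_right_of_sign_deriv hsign)⟩

lemma IsLocalMin.deriv_deriv_nonneg (h : IsLocalMin f x₀) (hc : Continuous f) :
    0 ≤ deriv (deriv f) x₀ := by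
  by_contra! hneg
  obtain ⟨x, hle, hlt⟩ := ((h.filter_mono nhdsWithin_le_nhds).and
    (eventually_nhdsNE_lt_of_deriv_deriv_neg hc h.deriv_eq_zero hneg)).exists
  exact hlt.not_ge hle

end StrictSecondDerivativeTest

lemma Filter.Eventually.exists_mem_uIcc {p : ℝ → Prop} {a b : ℝ}
    (hp : ∀ᶠ x in 𝓝[≠] a, p x) (hab : a ≠ b) : ∃ x ∈ uIcc a b, p x := by
  rcases hab.lt_or_gt with h | h
  · obtain ⟨x, hx, hpx⟩ :=
      ((hp.filter_mono (nhdsGT_le_nhdsNE a)).and (Ioo_mem_nhdsGT h)).exists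
    exact ⟨x, mem_uIcc_of_le hpx.1.le hpx.2.le, hx⟩
  · obtain ⟨x, hx, hpx⟩ :=
      ((hp.filter_mono (nhdsLT_le_nhdsNE a)).and (Ioo_mem_nhdsLT h)).exists
    exact ⟨x, mem_uIcc_of_ge hpx.1.le hpx.2.le, hx⟩

lemma uIcc_mem_nhds {α : Type*} [LinearOrder α] [TopologicalSpace α] [OrderTopology α]
    {a b x : α} (hx : x ∈ uIcc a b) (ha : x ≠ a) (hb : x ≠ b) :
    uIcc a b ∈ 𝓝 x := by
  have hmin : x ≠ min a b := by rcases min_choice a b with h | h <;> rwa [h]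
  have hmax : x ≠ max a b := by rcases max_choice a b with h | h <;> rwa [h]
  exact Icc_mem_nhds (lt_of_le_of_ne hx.1 hmin.symm) (lt_of_le_of_ne hx.2 hmax)

theorem stmt6_general (g : ℝ → ℝ) (hg : Differentiable ℝ g)
    (hmorse : ∀ x, deriv g x = 0 → deriv (deriv g) x ≠ 0)
    (x₀ : ℝ) (h1 : deriv g x₀ = 0) (h2 : deriv (deriv g) x₀ < 0)
    (y : ℝ) (hy : g x₀ < g y) :
    ∃ z, deriv g z = 0 ∧ 0 < deriv (deriv g) z ∧ g z < g x₀ := by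
  obtain ⟨z, hz, hmin⟩ := isCompact_uIcc.exists_isMinOn nonempty_uIcc hg.continuous.continuousOn
  obtain ⟨t, ht, hgt⟩ :=
    (eventually_nhdsNE_lt_of_deriv_deriv_neg hg.continuous h1 h2).exists_mem_uIcc
      (ne_of_apply_ne g hy.ne)
  have hgz : g z < g x₀ := (hmin ht).trans_lt hgt
  have hloc : IsLocalMin g z := hmin.isLocalMin <|
    uIcc_mem_nhds hz (ne_of_apply_ne g hgz.ne) (ne_of_apply_ne g (hgz.trans hy).ne)
  have hdz : deriv g z = 0 := hloc.deriv_eq_zero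
  exact ⟨z, hdz, (hloc.deriv_deriv_nonneg hg.continuous).lt_of_ne (hmorse z hdz).symm, hgz⟩

/-- For a twice differentiable function with only nondegenerate critical points:
if `x₀` is a nondegenerate local maximum (`g'(x₀) = 0`, `g''(x₀) < 0`) and some value of
`g` exceeds `g(x₀)`, then there is a nondegenerate local minimum `z` with `g(z) < g(x₀)`. -/
theorem stmt6 (g : ℝ → ℝ) (hg : Differentiable ℝ g) (hg' : Differentiable ℝ (deriv g))
    (hmorse : ∀ x, deriv g x = 0 → deriv (deriv g) x ≠ 0)
    (x₀ : ℝ) (h1 : deriv g x₀ = 0) (h2 : deriv (deriv g) x₀ < 0)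
    (y : ℝ) (hy : g x₀ < g y) :
    ∃ z, deriv g z = 0 ∧ 0 < deriv (deriv g) z ∧ g z < g x₀ :=
  stmt6_general g hg hmorse x₀ h1 h2 y hy
end
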